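/- arXiv:quant-ph/0508164 — 4 statements merged into one kernel-verified Lean document; each statement's English description precedes it below -/
import Mathlib

section
/- Let m, n ≥ 1, let U be a unitary matrix indexed by Fin m × Fin n with complex entries, and let j : Fin m. Then the set S^j := { ψ : Fin m × Fin n → ℂ | the partial trace over the second factor of U|ψ⟩⟨ψ|U† equals ‖ψ‖² • |e_j⟩⟨e_j| } is exactly the preimage under U of the linear subspace { f | ∃ φ : Fin n → ℂ, ∀ i k, f(i,k) = e_j(i) · φ(k) }; in particular S^j is a linear subspace of dimension n. (This is the paper's claim that each set S_x^j is an affine space for which a basis may be computed for any given local unitary U.) -/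
open Matrix BigOperators

/-- Partial trace over the second tensor factor. -/
noncomputable def ptr2 {m n : ℕ} (ρ : Matrix (Fin m × Fin n) (Fin m × Fin n) ℂ) :
    Matrix (Fin m) (Fin m) ℂ :=
  fun i i' => ∑ k : Fin n, ρ (i, k) (i', k)

/-- Outer product |ψ⟩⟨φ|. -/
def outer {ι : Type*} (ψ φ : ι → ℂ) : Matrix ι ι ℂ :=
  fun a b => ψ a * star (φ b)

/-- Standard basis vector e_j. -/
def stdBasis {m : ℕ} (j : Fin m) : Fin m → ℂ :=
  fun i => if i = j then 1 else 0

/-!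
Conjugation by `U` turns `|ψ⟩⟨ψ|` into `|Uψ⟩⟨Uψ|` and preserves `‖ψ‖`, so the condition only
concerns `g = Uψ`. The partial trace of `|g⟩⟨g|` has diagonal entries `∑ₖ |g(i,k)|²`, so it is
`‖g‖² |e_j⟩⟨e_j|` exactly when `g` vanishes off the row `i = j`, i.e. when `g = e_j ⊗ φ` for
some `φ`. These `g` form an `n`-dimensional space, and `U` is invertible.
-/

section Unitary

variable {ι : Type*} [Fintype ι]

theorem mul_outer_mul_conjTranspose (U : Matrix ι ι ℂ) (ψ φ : ι → ℂ) :
    U * outer ψ φ * Uᴴ = outer (U *ᵥ ψ) (U *ᵥ φ) := by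
  ext a b
  simp only [mul_apply, outer, conjTranspose_apply, mulVec, dotProduct, star_sum, star_mul',
    Finset.sum_mul, Finset.mul_sum]
  exact Finset.sum_congr rfl fun _ _ => Finset.sum_congr rfl fun _ _ => by ring

theorem star_dotProduct_self_eq_sum_norm_sq {𝕜 : Type*} [RCLike 𝕜] (v : ι → 𝕜) :
    star v ⬝ᵥ v = ((∑ x, ‖v x‖ ^ 2 : ℝ) : 𝕜) := by
  simp [dotProduct, RCLike.conj_mul]

theorem sum_norm_sq_mulVec [DecidableEq ι] {𝕜 : Type*} [RCLike 𝕜] {U : Matrix ι ι 𝕜}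
    (hU : Uᴴ * U = 1) (v : ι → 𝕜) : ∑ x, ‖(U *ᵥ v) x‖ ^ 2 = ∑ x, ‖v x‖ ^ 2 := by
  have h : star (U *ᵥ v) ⬝ᵥ (U *ᵥ v) = star v ⬝ᵥ v := by
    rw [star_mulVec, dotProduct_mulVec, vecMul_vecMul, hU, vecMul_one]
  simpa only [star_dotProduct_self_eq_sum_norm_sq, RCLike.ofReal_inj] using h

end Unitary

section PartialTrace

variable {m n : ℕ}

theorem ptr2_outer_self_apply_self (g : Fin m × Fin n → ℂ) (i : Fin m) :
    ptr2 (outer g g) i i = ((∑ k, ‖g (i, k)‖ ^ 2 : ℝ) : ℂ) := by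
  simp [ptr2, outer, RCLike.mul_conj]

theorem ptr2_outer_self_eq_iff (g : Fin m × Fin n → ℂ) (j : Fin m) :
    ptr2 (outer g g) = (∑ x, ‖g x‖ ^ 2 : ℝ) • outer (stdBasis j) (stdBasis j) ↔
      ∀ i k, i ≠ j → g (i, k) = 0 := by
  constructor
  · intro h i k hij
    have hii : ((∑ k, ‖g (i, k)‖ ^ 2 : ℝ) : ℂ) = 0 := by
      rw [← ptr2_outer_self_apply_self, h]
      simp [outer, _root_.stdBasis, hij]
    rw [Complex.ofReal_eq_zero, Finset.sum_eq_zero_iff_of_nonneg (fun _ _ => by positivity)] at hii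
    simpa using hii k (Finset.mem_univ k)
  · intro h
    have hsum : ∑ x, ‖g x‖ ^ 2 = ∑ k, ‖g (j, k)‖ ^ 2 := by
      rw [Fintype.sum_prod_type, Fintype.sum_eq_single j fun i hi => by simp [h i _ hi]]
    ext i i'
    by_cases hij : i = j ∧ i' = j
    · obtain ⟨rfl, rfl⟩ := hij
      simp [ptr2_outer_self_apply_self, hsum, outer, _root_.stdBasis]
    · rcases not_and_or.1 hij with hi | hi
      · simp [ptr2, outer, _root_.stdBasis, hi, fun k => h i k hi]
      · simp [ptr2, outer, _root_.stdBasis, hi, fun k => h i' k hi]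

def tensorStdBasis (j : Fin m) : (Fin n → ℂ) →ₗ[ℂ] (Fin m × Fin n → ℂ) where
  toFun φ p := stdBasis j p.1 * φ p.2
  map_add' φ χ := by ext p; simp [mul_add]
  map_smul' c φ := by ext p; simp [mul_left_comm]

theorem tensorStdBasis_injective (j : Fin m) :
    Function.Injective (tensorStdBasis (n := n) j) := fun φ χ h => by
  ext k
  simpa [tensorStdBasis, _root_.stdBasis] using congrFun h (j, k)

theorem coe_range_tensorStdBasis (j : Fin m) :
    (LinearMap.range (tensorStdBasis (n := n) j) : Set (Fin m × Fin n → ℂ)) =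
      { f | ∃ φ : Fin n → ℂ, ∀ i k, f (i, k) = stdBasis j i * φ k } := by
  ext f
  simp [tensorStdBasis, funext_iff, eq_comm]

theorem mem_range_tensorStdBasis_iff (j : Fin m) (f : Fin m × Fin n → ℂ) :
    f ∈ LinearMap.range (tensorStdBasis j) ↔ ∀ i k, i ≠ j → f (i, k) = 0 := by
  rw [← SetLike.mem_coe, coe_range_tensorStdBasis]
  constructor
  · rintro ⟨φ, hφ⟩ i k hij
    simp [hφ, _root_.stdBasis, hij]
  · intro h
    refine ⟨fun k => f (j, k), fun i k => ?_⟩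
    by_cases hij : i = j
    · simp [hij, _root_.stdBasis]
    · simp [hij, h i k, _root_.stdBasis]

end PartialTrace

theorem stmt_1_general {m n : ℕ}
    (U : Matrix (Fin m × Fin n) (Fin m × Fin n) ℂ) (hU : Uᴴ * U = 1)
    (j : Fin m)
    (S : Set (Fin m × Fin n → ℂ))
    (hS : S = { ψ | ptr2 (U * outer ψ ψ * Uᴴ) =
        (∑ x : Fin m × Fin n, ‖ψ x‖ ^ 2 : ℝ) • outer (stdBasis j) (stdBasis j) }) :
    S = (fun ψ => U.mulVec ψ) ⁻¹'
        { f | ∃ φ : Fin n → ℂ, ∀ (i : Fin m) (k : Fin n), f (i, k) = stdBasis j i * φ k } ∧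
      ∃ V : Submodule ℂ (Fin m × Fin n → ℂ), (V : Set (Fin m × Fin n → ℂ)) = S ∧
        Module.finrank ℂ V = n := by
  let W := LinearMap.range (tensorStdBasis (n := n) j)
  have hSW : S = (fun ψ => U *ᵥ ψ) ⁻¹' W := by
    ext ψ
    rw [hS, Set.mem_ofPred_eq, mul_outer_mul_conjTranspose, ← sum_norm_sq_mulVec hU,
      ptr2_outer_self_eq_iff, Set.mem_preimage, SetLike.mem_coe, mem_range_tensorStdBasis_iff]
  let e := Matrix.UnitaryGroup.toLinearEquiv ⟨U, Matrix.mem_unitaryGroup_iff'.2 hU⟩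
  refine ⟨by rw [hSW, coe_range_tensorStdBasis], W.comap e.toLinearMap, hSW.symm, ?_⟩
  rw [Submodule.comap_equiv_eq_map_symm, LinearEquiv.finrank_map_eq,
    LinearMap.finrank_range_of_inj (tensorStdBasis_injective j), Module.finrank_fin_fun]

theorem stmt_1 {m n : ℕ} (hm : 1 ≤ m) (hn : 1 ≤ n)
    (U : Matrix (Fin m × Fin n) (Fin m × Fin n) ℂ) (hU : Uᴴ * U = 1)
    (j : Fin m)
    (S : Set (Fin m × Fin n → ℂ))
    (hS : S = { ψ | ptr2 (U * outer ψ ψ * Uᴴ) =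
        (∑ x : Fin m × Fin n, ‖ψ x‖ ^ 2 : ℝ) • outer (stdBasis j) (stdBasis j) }) :
    S = (fun ψ => U.mulVec ψ) ⁻¹'
        { f | ∃ φ : Fin n → ℂ, ∀ (i : Fin m) (k : Fin n), f (i, k) = stdBasis j i * φ k } ∧
      ∃ V : Submodule ℂ (Fin m × Fin n → ℂ), (V : Set (Fin m × Fin n → ℂ)) = S ∧
        Module.finrank ℂ V = n :=
  stmt_1_general U hU j S hS
end

section
/- Let a, b, c ≥ 1 and let ψ : Fin a × Fin b × Fin c → ℂ be a unit vector. Let j₁ : Fin a and j₂ : Fin b. Suppose the partial trace of |ψ⟩⟨ψ| onto the first factor (tracing out factors 2 and 3) equals |e_{j₁}⟩⟨e_{j₁}|, and the partial trace onto the second factor (tracing out factors 1 and 3) equals |e_{j₂}⟩⟨e_{j₂}|. Then the partial trace onto the first two factors (tracing out factor 3) equals the outer product |e_{j₁} ⊗ e_{j₂}⟩⟨e_{j₁} ⊗ e_{j₂}|, where (e_{j₁} ⊗ e_{j₂})(i,k) = e_{j₁}(i)·e_{j₂}(k). (This is the paper's claim that the set S_A^j of states mapping to the basis state |j⟩ =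 |j₁,…,j_n⟩ on a finite region A is the intersection of the single-cell sets S_{x_k}^{j_k}.) -/
open Matrix BigOperators

/-- Partial trace onto the first factor (tracing out factors 2 and 3). -/
noncomputable def ptrFst {a b c : ℕ}
    (ρ : Matrix (Fin a × Fin b × Fin c) (Fin a × Fin b × Fin c) ℂ) :
    Matrix (Fin a) (Fin a) ℂ :=
  fun i i' => ∑ k : Fin b, ∑ l : Fin c, ρ (i, k, l) (i', k, l)

/-- Partial trace onto the second factor (tracing out factors 1 and 3). -/
noncomputable def ptrSnd {a b c : ℕ}
    (ρ : Matrix (Fin a × Fin b × Fin c) (Fin a × Fin b × Fin c) ℂ) :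
    Matrix (Fin b) (Fin b) ℂ :=
  fun k k' => ∑ i : Fin a, ∑ l : Fin c, ρ (i, k, l) (i, k', l)

/-- Partial trace onto the first two factors (tracing out factor 3). -/
noncomputable def ptrFstSnd {a b c : ℕ}
    (ρ : Matrix (Fin a × Fin b × Fin c) (Fin a × Fin b × Fin c) ℂ) :
    Matrix (Fin a × Fin b) (Fin a × Fin b) ℂ :=
  fun p q => ∑ l : Fin c, ρ (p.1, p.2, l) (q.1, q.2, l)

/-! The diagonal entries of the one-factor partial traces of `|ψ⟩⟨ψ|` are the marginal weights
of `|ψ|²`. Since these marginals are concentrated at `j₁` and `j₂`, `ψ` vanishes off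
`{j₁} × {j₂} × Fin c`, so the partial trace onto the first two factors has a single nonzero
entry, at `((j₁, j₂), (j₁, j₂))`, which equals the full weight `‖ψ‖² = 1`. -/

lemma outer_self_apply_self {ι : Type*} (ψ : ι → ℂ) (x : ι) :
    outer ψ ψ x x = ((‖ψ x‖ ^ 2 : ℝ) : ℂ) := by
  rw [outer, Complex.star_def, Complex.mul_conj', Complex.ofReal_pow]

lemma outer_stdBasis_apply_self_of_ne {m : ℕ} {i j : Fin m} (h : i ≠ j) :
    outer (stdBasis j) (stdBasis j) i i = 0 := by
  simp [outer, _root_.stdBasis, h]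

lemma stdBasis_mul_stdBasis {m n : ℕ} (j₁ : Fin m) (j₂ : Fin n) (p : Fin m × Fin n) :
    stdBasis j₁ p.1 * stdBasis j₂ p.2 = if p = (j₁, j₂) then 1 else 0 := by
  obtain ⟨i, k⟩ := p
  by_cases hi : i = j₁ <;> by_cases hk : k = j₂ <;> simp [_root_.stdBasis, hi, hk]

lemma eq_zero_of_sum_norm_sq_eq_zero {ι : Type*} [Fintype ι] {f : ι → ℂ}
    (h : ∑ x, ‖f x‖ ^ 2 = 0) (x : ι) : f x = 0 := by
  have hf := (Fintype.sum_eq_zero_iff_of_nonneg fun x => by positivity).1 h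
  simpa using congrFun hf x

section ThreePartite

variable {a b c : ℕ} {ψ : Fin a × Fin b × Fin c → ℂ}

lemma ptrFst_outer_self_apply_self (i : Fin a) :
    ptrFst (outer ψ ψ) i i = ((∑ p : Fin b × Fin c, ‖ψ (i, p)‖ ^ 2 : ℝ) : ℂ) := by
  simp only [ptrFst, outer_self_apply_self, Fintype.sum_prod_type, Complex.ofReal_sum]

lemma ptrSnd_outer_self_apply_self (k : Fin b) :
    ptrSnd (outer ψ ψ) k k = ((∑ p : Fin a × Fin c, ‖ψ (p.1, k, p.2)‖ ^ 2 : ℝ) : ℂ) := by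
  simp only [ptrSnd, outer_self_apply_self, Fintype.sum_prod_type, Complex.ofReal_sum]

lemma apply_eq_zero_of_ptrFst_eq_outer_stdBasis {j : Fin a}
    (h : ptrFst (outer ψ ψ) = outer (stdBasis j) (stdBasis j)) {i : Fin a} (hi : i ≠ j)
    (p : Fin b × Fin c) : ψ (i, p) = 0 := by
  refine eq_zero_of_sum_norm_sq_eq_zero (f := fun p => ψ (i, p)) ?_ p
  have hii := congrFun (congrFun h i) i
  rw [ptrFst_outer_self_apply_self, outer_stdBasis_apply_self_of_ne hi] at hii
  exact_mod_cast hii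

lemma apply_eq_zero_of_ptrSnd_eq_outer_stdBasis {j : Fin b}
    (h : ptrSnd (outer ψ ψ) = outer (stdBasis j) (stdBasis j)) {k : Fin b} (hk : k ≠ j)
    (p : Fin a × Fin c) : ψ (p.1, k, p.2) = 0 := by
  refine eq_zero_of_sum_norm_sq_eq_zero (f := fun p => ψ (p.1, k, p.2)) ?_ p
  have hkk := congrFun (congrFun h k) k
  rw [ptrSnd_outer_self_apply_self, outer_stdBasis_apply_self_of_ne hk] at hkk
  exact_mod_cast hkk

lemma sum_norm_sq_eq_of_support {j : Fin a × Fin b}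
    (hψ : ∀ p, p ≠ j → ∀ l, ψ (p.1, p.2, l) = 0) :
    ∑ x, ‖ψ x‖ ^ 2 = ∑ l, ‖ψ (j.1, j.2, l)‖ ^ 2 := by
  rw [← (Equiv.prodAssoc (Fin a) (Fin b) (Fin c)).sum_comp, Fintype.sum_prod_type,
    Fintype.sum_eq_single j fun p hp => by simp [hψ p hp]]
  rfl

lemma ptrFstSnd_outer_self_of_support {j : Fin a × Fin b}
    (hψ : ∀ p, p ≠ j → ∀ l, ψ (p.1, p.2, l) = 0) (p q : Fin a × Fin b) :
    ptrFstSnd (outer ψ ψ) p q =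
      if p = j ∧ q = j then ((∑ l, ‖ψ (j.1, j.2, l)‖ ^ 2 : ℝ) : ℂ) else 0 := by
  by_cases hp : p = j
  · by_cases hq : q = j
    · subst hp hq
      simp only [ptrFstSnd, outer_self_apply_self, and_self, if_true, Complex.ofReal_sum]
    · simp [ptrFstSnd, outer, hψ q hq, hq]
  · simp [ptrFstSnd, outer, hψ p hp, hp]

end ThreePartite

theorem stmt_3_general {a b c : ℕ}
    (ψ : Fin a × Fin b × Fin c → ℂ)
    (hψ : ∑ x : Fin a × Fin b × Fin c, ‖ψ x‖ ^ 2 = 1)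
    (j₁ : Fin a) (j₂ : Fin b)
    (h₁ : ptrFst (outer ψ ψ) = outer (stdBasis j₁) (stdBasis j₁))
    (h₂ : ptrSnd (outer ψ ψ) = outer (stdBasis j₂) (stdBasis j₂)) :
    ptrFstSnd (outer ψ ψ) =
      outer (fun p : Fin a × Fin b => stdBasis j₁ p.1 * stdBasis j₂ p.2)
            (fun p : Fin a × Fin b => stdBasis j₁ p.1 * stdBasis j₂ p.2) := by
  have hsupp : ∀ p : Fin a × Fin b, p ≠ (j₁, j₂) → ∀ l, ψ (p.1, p.2, l) = 0 := by
    rintro ⟨i, k⟩ hp l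
    by_cases hi : i = j₁
    · subst hi
      exact apply_eq_zero_of_ptrSnd_eq_outer_stdBasis h₂ (by simpa using hp) (i, l)
    · exact apply_eq_zero_of_ptrFst_eq_outer_stdBasis h₁ hi (k, l)
  have hfiber : ∑ l, ‖ψ (j₁, j₂, l)‖ ^ 2 = 1 := (sum_norm_sq_eq_of_support hsupp).symm.trans hψ
  ext p q
  rw [ptrFstSnd_outer_self_of_support hsupp, hfiber, outer, stdBasis_mul_stdBasis,
    stdBasis_mul_stdBasis]
  by_cases hp : p = (j₁, j₂) <;> by_cases hq : q = (j₁, j₂) <;> simp [hp, hq]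

theorem stmt_3 {a b c : ℕ} (ha : 1 ≤ a) (hb : 1 ≤ b) (hc : 1 ≤ c)
    (ψ : Fin a × Fin b × Fin c → ℂ)
    (hψ : ∑ x : Fin a × Fin b × Fin c, ‖ψ x‖ ^ 2 = 1)
    (j₁ : Fin a) (j₂ : Fin b)
    (h₁ : ptrFst (outer ψ ψ) = outer (stdBasis j₁) (stdBasis j₁))
    (h₂ : ptrSnd (outer ψ ψ) = outer (stdBasis j₂) (stdBasis j₂)) :
    ptrFstSnd (outer ψ ψ) =
      outer (fun p : Fin a × Fin b => stdBasis j₁ p.1 * stdBasis j₂ p.2)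
            (fun p : Fin a × Fin b => stdBasis j₁ p.1 * stdBasis j₂ p.2) :=
  stmt_3_general ψ hψ j₁ j₂ h₁ h₂
end

section
/- Let m, n ≥ 1 and let X be a unitary matrix indexed by Fin m × Fin n with complex entries. Suppose that for every matrix ρ indexed by Fin m × Fin n, the partial trace over the second factor of X ρ X† equals the partial trace over the second factor of ρ. Then there exists a unitary matrix W indexed by Fin n such that X = 1_m ⊗ W (Kronecker product of the m×m identity with W). (This is the uniqueness direction of the paper's claim that a global evolution operator is valid if and only if it agrees with the one constructed from the local operator, up to unitary operators acting on the traced-out cells N(A)∖A.) -/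
open Matrix BigOperators

/-- Kronecker product of an m×m matrix with an n×n matrix. -/
def kron {m n : ℕ} (A : Matrix (Fin m) (Fin m) ℂ) (B : Matrix (Fin n) (Fin n) ℂ) :
    Matrix (Fin m × Fin n) (Fin m × Fin n) ℂ :=
  fun p q => A p.1 q.1 * B p.2 q.2

/-
Testing the invariance of the partial trace on the matrix units `single p q 1` shows that the
`n × n` blocks `X_{ai}` of `X` (rows in copy `a`, columns in copy `i` of `Fin n`) satisfy
`X_{bj}ᴴ X_{ai} = [i = a ∧ j = b] • 1`. So every off-diagonal block has `X_{ai}ᴴ X_{ai} = 0` and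
vanishes, `W := X_{i₀i₀}` is unitary, and each diagonal block is a right inverse of `Wᴴ`, hence
equals `W`.
-/

lemma mul_single_mul_conjTranspose_apply {ι R : Type*} [Fintype ι] [DecidableEq ι]
    [Semiring R] [StarRing R] (X : Matrix ι ι R) (p q u v : ι) :
    (X * single p q 1 * Xᴴ : Matrix ι ι R) u v = X u p * star (X v q) := by
  simp [mul_apply, single_apply, ite_and, Finset.sum_ite_eq, ite_mul]

section

variable {m n : ℕ}

lemma ptr2_single (i j a b : Fin m) (k l : Fin n) :
    ptr2 (single (i, k) (j, l) (1 : ℂ)) a b = if i = a ∧ j = b ∧ k = l then 1 else 0 := by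
  split_ifs with hpq
  · obtain ⟨rfl, rfl, rfl⟩ := hpq
    rw [ptr2, Finset.sum_eq_single k] <;> simp +contextual [eq_comm]
  · refine Finset.sum_eq_zero fun c _ => single_apply_of_ne _ _ _ _ _ ?_
    grind

def block (X : Matrix (Fin m × Fin n) (Fin m × Fin n) ℂ) (i j : Fin m) :
    Matrix (Fin n) (Fin n) ℂ :=
  of fun c k => X (i, c) (j, k)

variable {X : Matrix (Fin m × Fin n) (Fin m × Fin n) ℂ}

lemma conjTranspose_block_mul_block (h : ∀ ρ, ptr2 (X * ρ * Xᴴ) = ptr2 ρ) (a i b j : Fin m) :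
    (block X b j)ᴴ * block X a i = if i = a ∧ j = b then 1 else 0 := by
  ext l k
  have hkl := congrFun₂ (h (single (i, k) (j, l) 1)) a b
  rw [ptr2_single] at hkl
  simp only [ptr2, mul_single_mul_conjTranspose_apply] at hkl
  simp only [mul_apply, conjTranspose_apply, block, of_apply]
  rw [Finset.sum_congr rfl fun c _ => mul_comm _ _, hkl]
  by_cases hij : i = a ∧ j = b
  · simp [hij, one_apply, eq_comm]
  · rw [if_neg (by tauto), if_neg hij, Matrix.zero_apply]

open scoped ComplexOrder in
lemma block_eq_zero_of_ne (h : ∀ ρ, ptr2 (X * ρ * Xᴴ) = ptr2 ρ) {a i : Fin m} (hai : a ≠ i) :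
    block X a i = 0 := by
  rw [← conjTranspose_mul_self_eq_zero, conjTranspose_block_mul_block h, if_neg (by tauto)]

lemma block_self_eq (h : ∀ ρ, ptr2 (X * ρ * Xᴴ) = ptr2 ρ) (i j : Fin m) :
    block X i i = block X j j := by
  have hj : (block X j j)ᴴ * block X j j = 1 := by simp [conjTranspose_block_mul_block h]
  have hi : (block X j j)ᴴ * block X i i = 1 := by simp [conjTranspose_block_mul_block h]
  exact (left_inv_eq_right_inv (mul_eq_one_comm.mp hj) hi).symm

lemma eq_kron_one_of_block {W : Matrix (Fin n) (Fin n) ℂ}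
    (hoff : ∀ a i, a ≠ i → block X a i = 0) (hdiag : ∀ i, block X i i = W) :
    X = kron 1 W := by
  ext ⟨a, c⟩ ⟨i, k⟩
  by_cases hai : a = i
  · subst hai
    simp [kron, ← hdiag a, block]
  · simpa [kron, hai, block] using congrFun₂ (hoff a i hai) c k

end

theorem stmt_5_general {m n : ℕ} (hm : 1 ≤ m)
    (X : Matrix (Fin m × Fin n) (Fin m × Fin n) ℂ)
    (h : ∀ ρ : Matrix (Fin m × Fin n) (Fin m × Fin n) ℂ,
      ptr2 (X * ρ * Xᴴ) = ptr2 ρ) :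
    ∃ W : Matrix (Fin n) (Fin n) ℂ, Wᴴ * W = 1 ∧
      X = kron (1 : Matrix (Fin m) (Fin m) ℂ) W := by
  let i₀ : Fin m := ⟨0, hm⟩
  refine ⟨block X i₀ i₀, by simp [conjTranspose_block_mul_block h], ?_⟩
  exact eq_kron_one_of_block (fun _ _ => block_eq_zero_of_ne h) (fun i => block_self_eq h i i₀)

theorem stmt_5 {m n : ℕ} (hm : 1 ≤ m) (hn : 1 ≤ n)
    (X : Matrix (Fin m × Fin n) (Fin m × Fin n) ℂ) (hX : Xᴴ * X = 1)
    (h : ∀ ρ : Matrix (Fin m × Fin n) (Fin m × Fin n) ℂ,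
      ptr2 (X * ρ * Xᴴ) = ptr2 ρ) :
    ∃ W : Matrix (Fin n) (Fin n) ℂ, Wᴴ * W = 1 ∧
      X = kron (1 : Matrix (Fin m) (Fin m) ℂ) W :=
  stmt_5_general hm X h
end

section
/- Let n ≥ 1, let ι be a finite index type, and let A : ι → Matrix (Fin n) (Fin n) ℂ be a finite family of complex matrices. Then the products ((∏_{j : ι} exp(A j / N))^N) converge, as the natural number N tends to infinity, to exp(∑_{j : ι} A j) (Lie–Trotter product formula; the product over ι is taken in a fixed order). (This is the mathematical content of the paper's Theorem 3: a Coloured QCA, which applies the pairwise coupling evolutions e^{-itH_{i,j}} sequentially in time steps of duration Δt, approximates the Continuous-Time QCA generated by the sum of the coupling Hamiltonians as Δt → 0.) -/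
open Matrix BigOperators Filter

/-!
Both `x N = ∏ⱼ exp (Aⱼ / N)` and `y N = exp (S / N)`, with `S = ∑ⱼ Aⱼ`, are values at `t = 1 / N`
of curves through `1` with derivative `S` at `t = 0`, so `N (x N - y N) → 0` while
`‖x N‖, ‖y N‖ ≤ 1 + C / N`. Telescoping `x N ^ N - y N ^ N` gives
`‖x N ^ N - y N ^ N‖ ≤ e ^ C · N ‖x N - y N‖ → 0`, and `y N ^ N = exp S`.
-/

open NormedSpace Topology

section LieProduct

variable {𝕂 𝔸 : Type*} [RCLike 𝕂]

theorem norm_pow_sub_pow_le [NormedRing 𝔸] [NormOneClass 𝔸] {a b : 𝔸} {K : ℝ} (ha : ‖a‖ ≤ K)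
    (hb : ‖b‖ ≤ K) : ∀ N : ℕ, ‖a ^ N - b ^ N‖ ≤ N * K ^ (N - 1) * ‖a - b‖
  | 0 => by simp
  | N + 1 => by
    have ih := norm_pow_sub_pow_le ha hb N
    have hbN : ‖b ^ N‖ ≤ K ^ N :=
      (norm_pow_le b N).trans (pow_le_pow_left₀ (norm_nonneg b) hb N)
    have hKN : K * (N * K ^ (N - 1)) = N * K ^ N := by
      rcases N with _ | N <;> simp [pow_succ]; ring
    calc ‖a ^ (N + 1) - b ^ (N + 1)‖ = ‖a * (a ^ N - b ^ N) + (a - b) * b ^ N‖ := by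
          rw [pow_succ', pow_succ']; noncomm_ring
      _ ≤ ‖a‖ * ‖a ^ N - b ^ N‖ + ‖a - b‖ * ‖b ^ N‖ :=
          norm_add_le_of_le (norm_mul_le _ _) (norm_mul_le _ _)
      _ ≤ K * (N * K ^ (N - 1) * ‖a - b‖) + ‖a - b‖ * K ^ N := by
          gcongr; exact (norm_nonneg a).trans ha
      _ = (N * K ^ N + K ^ N) * ‖a - b‖ := by rw [← hKN]; ring
      _ = (N + 1 : ℕ) * K ^ (N + 1 - 1) * ‖a - b‖ := by push_cast; ring_nf

theorem tendsto_natCast_smul_sub_of_hasDerivAt [NormedAddCommGroup 𝔸] [NormedSpace 𝕂 𝔸]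
    {f : 𝕂 → 𝔸} {v : 𝔸} (hf : HasDerivAt f v 0) :
    Tendsto (fun N : ℕ => (N : 𝕂) • (f (N : 𝕂)⁻¹ - f 0)) atTop (𝓝 v) := by
  have hinv : Tendsto (fun N : ℕ => (N : 𝕂)⁻¹) atTop (𝓝[≠] 0) :=
    tendsto_nhdsWithin_iff.2 ⟨tendsto_inv_atTop_nhds_zero_nat,
      eventually_ne_atTop 0 |>.mono fun N hN => by simpa using hN⟩
  simpa [Function.comp_def] using hf.tendsto_slope_zero.comp hinv

theorem tendsto_pow_sub_pow_of_tendsto_natCast_smul_sub_one [NormedRing 𝔸] [NormOneClass 𝔸]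
    [NormedAlgebra 𝕂 𝔸] {x y : ℕ → 𝔸} {v : 𝔸}
    (hx : Tendsto (fun N : ℕ => (N : 𝕂) • (x N - 1)) atTop (𝓝 v))
    (hy : Tendsto (fun N : ℕ => (N : 𝕂) • (y N - 1)) atTop (𝓝 v)) :
    Tendsto (fun N => x N ^ N - y N ^ N) atTop (𝓝 0) := by
  have hxy : Tendsto (fun N : ℕ => (N : 𝕂) • (x N - y N)) atTop (𝓝 0) := by
    simpa [← smul_sub] using hx.sub hy
  set C := ‖v‖ + 1
  have hC : 0 ≤ C := by positivity
  have hbound {z : ℕ → 𝔸} (hz : Tendsto (fun N : ℕ => (N : 𝕂) • (z N - 1)) atTop (𝓝 v)) :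
      ∀ᶠ N in atTop, ‖z N‖ ≤ 1 + C / N := by
    filter_upwards [hz.norm.eventually (ge_mem_nhds (lt_add_one ‖v‖)), eventually_gt_atTop 0]
      with N hN hN0
    rw [norm_smul, RCLike.norm_natCast] at hN
    calc ‖z N‖ ≤ ‖(1 : 𝔸)‖ + ‖z N - 1‖ := norm_le_norm_add_norm_sub' _ _
      _ ≤ 1 + C / N := by
          rw [norm_one]; gcongr 1 + ?_; rwa [le_div_iff₀ (by positivity), mul_comm]
  refine squeeze_zero_norm' ?_ (by simpa using hxy.norm.const_mul (Real.exp C))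
  filter_upwards [hbound hx, hbound hy, eventually_gt_atTop 0] with N hxN hyN hN0
  have hK : 1 ≤ 1 + C / N := le_add_of_nonneg_right (by positivity)
  have hKN : (1 + C / N) ^ N ≤ Real.exp C := by
    simpa [sub_eq_add_neg, neg_div] using
      Real.one_sub_div_pow_le_exp_neg (n := N) (t := -C) (by linarith [N.cast_nonneg (α := ℝ)])
  calc ‖x N ^ N - y N ^ N‖ ≤ N * (1 + C / N) ^ (N - 1) * ‖x N - y N‖ :=
        norm_pow_sub_pow_le hxN hyN N
    _ = (1 + C / N) ^ (N - 1) * ‖(N : 𝕂) • (x N - y N)‖ := by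
        rw [norm_smul, RCLike.norm_natCast]; ring
    _ ≤ Real.exp C * ‖(N : 𝕂) • (x N - y N)‖ := by
        gcongr
        exact (pow_le_pow_right₀ hK (Nat.sub_le N 1)).trans hKN

variable [NormedRing 𝔸] [NormedAlgebra 𝕂 𝔸] [CompleteSpace 𝔸]

theorem hasDerivAt_list_prod_exp_smul (l : List 𝔸) :
    HasDerivAt (fun t : 𝕂 => (l.map fun a => exp (t • a)).prod) l.sum 0 := by
  induction l with
  | nil => simpa using hasDerivAt_const (0 : 𝕂) (1 : 𝔸)
  | cons a l ih => simpa using (hasDerivAt_exp_smul_const a (0 : 𝕂)).fun_mul ih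

theorem tendsto_list_prod_exp_smul_pow [NormOneClass 𝔸] (l : List 𝔸) :
    Tendsto (fun N : ℕ => (l.map fun a => exp ((N : 𝕂)⁻¹ • a)).prod ^ N) atTop
      (𝓝 (exp l.sum)) := by
  have hx := tendsto_natCast_smul_sub_of_hasDerivAt (hasDerivAt_list_prod_exp_smul (𝕂 := 𝕂) l)
  have hy := tendsto_natCast_smul_sub_of_hasDerivAt (hasDerivAt_exp_smul_const (𝕂 := 𝕂) l.sum 0)
  simp only [zero_smul, exp_zero, List.map_const', List.prod_replicate, one_pow, one_mul] at hx hy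
  have h := (tendsto_pow_sub_pow_of_tendsto_natCast_smul_sub_one hx hy).add_const (exp l.sum)
  rw [zero_add] at h
  refine h.congr' ?_
  filter_upwards [eventually_ne_atTop 0] with N hN
  let : NormedAlgebra ℚ 𝔸 := NormedAlgebra.restrictScalars ℚ 𝕂 𝔸
  rw [← NormedSpace.exp_nsmul, ← Nat.cast_smul_eq_nsmul 𝕂, smul_smul,
    mul_inv_cancel₀ (by exact_mod_cast hN), one_smul, sub_add_cancel]

end LieProduct

theorem stmt_8 {n : ℕ} (hn : 1 ≤ n)
    {ι : Type*} [Fintype ι] [LinearOrder ι]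
    (A : ι → Matrix (Fin n) (Fin n) ℂ) :
    Tendsto
      (fun N : ℕ =>
        (((Finset.univ : Finset ι).sort (· ≤ ·)).map
            (fun j => NormedSpace.exp (((N : ℂ))⁻¹ • A j))).prod ^ N)
      atTop
      (nhds (NormedSpace.exp (∑ j : ι, A j))) := by
  -- A Banach-algebra norm with `‖1‖ = 1` inducing the entrywise topology.
  have : Nonempty (Fin n) := ⟨⟨0, hn⟩⟩
  let := Matrix.linftyOpNormedRing (n := Fin n) (α := ℂ)
  let := Matrix.linftyOpNormedAlgebra (R := ℂ) (n := Fin n) (α := ℂ)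
  have hsum : (((Finset.univ : Finset ι).sort (· ≤ ·)).map A).sum = ∑ j, A j := by
    rw [Finset.sum_eq_multiset_sum, ← Finset.sort_eq Finset.univ (· ≤ ·), Multiset.map_coe,
      Multiset.sum_coe]
  have h :=
    tendsto_list_prod_exp_smul_pow (𝕂 := ℂ) (((Finset.univ : Finset ι).sort (· ≤ ·)).map A)
  simp only [hsum, List.map_map, Function.comp_def] at h
  exact h
end
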